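/- Let 1 ≤ p < ∞ and T > 0, and let F, G : (0,T) × ℝ → ℂ be measurable with ∫₀ᵀ ‖F(s,·)‖_{L^p(ℝ)} ds < ∞ and ∫₀ᵀ ‖G(s,·)‖_{L^p(ℝ)} ds < ∞. Then (∫₀ᵀ ∫_ℝ |∫₀ᵗ F(s, x−t+s) ds · ∫₀ᵗ G(s', x+t−s') ds'|^p dx dt)^{1/p} ≤ (1/2)^{1/p} (∫₀ᵀ ‖F(s,·)‖_{L^p(ℝ)} ds)(∫₀ᵀ ‖G(s,·)‖_{L^p(ℝ)} ds). -/

import Mathlib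

/-!
Each Duhamel term is dominated by a function of one characteristic variable: for `0 < t < T`,
`|∫₀ᵗ F(s, x - t + s) ds| ≤ f (x - t)` with `f u = ∫₀ᵀ |F(s, u + s)| ds`, and
`|∫₀ᵗ G(s, x + t - s) ds| ≤ g (x + t)` with `g v = ∫₀ᵀ |G(s, v - s)| ds`.
The change of variables `(t, x) ↦ (x - t, x + t)` has Jacobian `2`, so
`‖f (x - t) g (x + t)‖_{L^p(ℝ²)} = 2^{-1/p} ‖f‖_p ‖g‖_p`, and Minkowski's integral inequality
with translation invariance gives `‖f‖_p ≤ ∫₀ᵀ ‖F(s, ·)‖_p ds`, likewise for `g`.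
-/

open MeasureTheory Set
open scoped ENNReal NNReal

namespace ENNReal

theorem rpow_one_div_le_of_le_mul_rpow {q r : ℝ} (hqr : q.HolderConjugate r) {I M : ℝ≥0∞}
    (hI : I ≠ ⊤) (h : I ≤ M * I ^ (1 / r)) : I ^ (1 / q) ≤ M := by
  rcases eq_or_ne I 0 with rfl | hI0
  · rw [ENNReal.zero_rpow_of_pos (one_div_pos.2 hqr.pos)]
    exact zero_le
  have hr : 0 ≤ 1 / r := (one_div_pos.2 hqr.symm.pos).le
  have hsplit : I ^ (1 / q) * I ^ (1 / r) = I := by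
    rw [← ENNReal.rpow_add_of_nonneg _ _ (one_div_pos.2 hqr.pos).le hr, one_div, one_div,
      hqr.inv_add_inv_eq_one, ENNReal.rpow_one]
  rwa [← ENNReal.mul_le_mul_iff_left (ENNReal.rpow_pos (pos_iff_ne_zero.2 hI0) hI).ne'
    (ENNReal.rpow_ne_top_of_nonneg hr hI), hsplit]

end ENNReal

namespace MeasureTheory

variable {α β : Type*} [MeasurableSpace α] [MeasurableSpace β] {μ : Measure α} {ν : Measure β}

theorem lintegral_le_of_forall_le_of_lintegral_ne_top [SigmaFinite μ] {Φ : α → ℝ≥0∞}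
    (hΦ : Measurable Φ) {C : ℝ≥0∞}
    (h : ∀ ψ : α → ℝ≥0∞, Measurable ψ → ψ ≤ Φ → ∫⁻ a, ψ a ∂μ ≠ ⊤ → ∫⁻ a, ψ a ∂μ ≤ C) :
    ∫⁻ a, Φ a ∂μ ≤ C := by
  refine lintegral_le_of_forall_fin_meas_le C fun s hs hμs => ?_
  have htrunc : ∫⁻ a in s, Φ a ∂μ = ⨆ n : ℕ, ∫⁻ a in s, min (Φ a) n ∂μ := by
    rw [← lintegral_iSup (fun n => hΦ.min measurable_const)
      (fun m n hmn a => min_le_min_left _ (Nat.cast_le.2 hmn))]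
    refine lintegral_congr fun a => ?_
    change Φ a = ⨆ n : ℕ, Φ a ⊓ (n : ℝ≥0∞)
    rw [← inf_iSup_eq, ENNReal.iSup_natCast, inf_top_eq]
  rw [htrunc]
  refine iSup_le fun n => ?_
  rw [← lintegral_indicator hs]
  refine h _ ((hΦ.min measurable_const).indicator hs)
    (fun a => (indicator_le_self' (fun _ _ => zero_le) a).trans (min_le_left _ _)) ?_
  rw [lintegral_indicator hs]
  exact ne_top_of_le_ne_top (by simpa using ENNReal.mul_ne_top (by simp) hμs)
    (setLIntegral_mono measurable_const fun a _ => min_le_right _ _)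

/-- Hölder against `χ ^ (q - 1)` gives `I ≤ M * I ^ (1 - 1 / q)` for `I = ∫ χ ^ q`, and
finiteness of `I` lets us cancel. -/
theorem lintegral_rpow_le_of_le_lintegral [SFinite μ] [SFinite ν] {q : ℝ} (hq : 1 < q)
    {h : β → α → ℝ≥0∞} (hh : Measurable (Function.uncurry h)) {χ : α → ℝ≥0∞}
    (hχ : Measurable χ) (hχh : ∀ a, χ a ≤ ∫⁻ b, h b a ∂ν) (hχq : ∫⁻ a, χ a ^ q ∂μ ≠ ⊤) :
    (∫⁻ a, χ a ^ q ∂μ) ^ (1 / q) ≤ ∫⁻ b, (∫⁻ a, h b a ^ q ∂μ) ^ (1 / q) ∂ν := by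
  have hqr := Real.HolderConjugate.conjExponent hq
  set r := q.conjExponent
  set I := ∫⁻ a, χ a ^ q ∂μ
  have hχr : ∫⁻ a, (χ a ^ (q - 1)) ^ r ∂μ = I := by
    simp_rw [← ENNReal.rpow_mul, hqr.sub_one_mul_conj]
    rfl
  refine ENNReal.rpow_one_div_le_of_le_mul_rpow hqr hχq ?_
  calc I = ∫⁻ a, χ a * χ a ^ (q - 1) ∂μ := by
        refine lintegral_congr fun a => ?_
        have := ENNReal.rpow_add_of_nonneg (x := χ a) 1 (q - 1) zero_le_one (by linarith)
        rwa [add_sub_cancel, ENNReal.rpow_one] at this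
    _ ≤ ∫⁻ a, (∫⁻ b, h b a ∂ν) * χ a ^ (q - 1) ∂μ := by gcongr with a; exact hχh a
    _ = ∫⁻ a, ∫⁻ b, h b a * χ a ^ (q - 1) ∂ν ∂μ := by
        refine lintegral_congr fun a => ?_
        exact (lintegral_mul_const _ (hh.comp measurable_prodMk_right)).symm
    _ = ∫⁻ b, ∫⁻ a, h b a * χ a ^ (q - 1) ∂μ ∂ν :=
        lintegral_lintegral_swap ((hh.comp measurable_swap).mul
          ((hχ.pow_const _).comp measurable_fst)).aemeasurable
    _ ≤ ∫⁻ b, (∫⁻ a, h b a ^ q ∂μ) ^ (1 / q) * I ^ (1 / r) ∂ν := by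
        gcongr with b
        rw [← hχr]
        exact ENNReal.lintegral_mul_le_Lp_mul_Lq μ hqr (hh.comp measurable_prodMk_left).aemeasurable
          (hχ.pow_const _).aemeasurable
    _ = (∫⁻ b, (∫⁻ a, h b a ^ q ∂μ) ^ (1 / q) ∂ν) * I ^ (1 / r) :=
        lintegral_mul_const _ ((hh.pow_const q).lintegral_prod_right'.pow_const _)

/-- Minkowski's integral inequality; truncation reduces it to the case of a finite left side. -/
theorem lintegral_rpow_lintegral_le [SigmaFinite μ] [SFinite ν] {q : ℝ} (hq : 1 ≤ q)
    {h : β → α → ℝ≥0∞} (hh : Measurable (Function.uncurry h)) :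
    (∫⁻ a, (∫⁻ b, h b a ∂ν) ^ q ∂μ) ^ (1 / q) ≤ ∫⁻ b, (∫⁻ a, h b a ^ q ∂μ) ^ (1 / q) ∂ν := by
  rcases hq.eq_or_lt with rfl | hq
  · simpa using (lintegral_lintegral_swap (f := fun a b => h b a)
      (hh.comp measurable_swap).aemeasurable).le
  have hq0 : 0 < q := zero_lt_one.trans hq
  have hΦ : Measurable fun a => ∫⁻ b, h b a ∂ν := hh.lintegral_prod_left'
  rw [one_div, ENNReal.rpow_inv_le_iff hq0]
  refine lintegral_le_of_forall_le_of_lintegral_ne_top (hΦ.pow_const q) fun ψ hψ hψΦ hψI => ?_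
  have hψq : ∀ a, (ψ a ^ q⁻¹) ^ q = ψ a := fun a => ENNReal.rpow_inv_rpow hq0.ne' _
  have key := lintegral_rpow_le_of_le_lintegral (μ := μ) hq hh (hψ.pow_const q⁻¹)
    (fun a => by simpa [ENNReal.rpow_inv_le_iff hq0] using hψΦ a) (by simpa [hψq] using hψI)
  simpa [hψq, ENNReal.rpow_inv_le_iff hq0] using key

theorem eLpNorm_lintegral_le [SigmaFinite μ] [SFinite ν] {p : ℝ≥0∞} (hp : 1 ≤ p) (hp_top : p ≠ ⊤)
    {h : β → α → ℝ≥0∞} (hh : Measurable (Function.uncurry h)) :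
    eLpNorm (fun a => ∫⁻ b, h b a ∂ν) p μ ≤ ∫⁻ b, eLpNorm (h b) p μ ∂ν := by
  simp only [eLpNorm_eq_lintegral_rpow_enorm_toReal (zero_lt_one.trans_le hp).ne' hp_top,
    enorm_eq_self]
  exact lintegral_rpow_lintegral_le (by simpa using ENNReal.toReal_mono hp_top hp) hh

theorem eLpNorm_lintegral_comp_le [SigmaFinite μ] [SFinite ν] {p : ℝ≥0∞} (hp : 1 ≤ p)
    (hp_top : p ≠ ⊤) {h : β → α → ℝ≥0∞} (hh : Measurable (Function.uncurry h))
    {τ : β → α → α} (hτ : Measurable (Function.uncurry τ))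
    (hτμ : ∀ b, MeasurePreserving (τ b) μ μ) :
    eLpNorm (fun a => ∫⁻ b, h b (τ b a) ∂ν) p μ ≤ ∫⁻ b, eLpNorm (h b) p μ ∂ν :=
  calc eLpNorm (fun a => ∫⁻ b, h b (τ b a) ∂ν) p μ
      ≤ ∫⁻ b, eLpNorm (fun a => h b (τ b a)) p μ ∂ν :=
        eLpNorm_lintegral_le hp hp_top (hh.comp (measurable_fst.prodMk hτ))
    _ = ∫⁻ b, eLpNorm (h b) p μ ∂ν := lintegral_congr fun b =>
        eLpNorm_comp_measurePreserving (hh.comp measurable_prodMk_left).aestronglyMeasurable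
          (hτμ b)

end MeasureTheory

theorem lintegral_comp_mul_left {g : ℝ → ℝ≥0∞} (hg : Measurable g) {c : ℝ} (hc : c ≠ 0) :
    ∫⁻ t, g (c * t) = ENNReal.ofReal |c⁻¹| * ∫⁻ t, g t := by
  rw [← lintegral_map hg (measurable_const_mul c), Real.map_volume_mul_left hc,
    lintegral_smul_measure, smul_eq_mul]

theorem lintegral_lintegral_comp_sub_mul_comp_add {f g : ℝ → ℝ≥0∞} (hf : Measurable f)
    (hg : Measurable g) :
    ∫⁻ t, ∫⁻ x, f (x - t) * g (x + t) = 2⁻¹ * (∫⁻ x, f x) * ∫⁻ x, g x := by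
  have hscale : ∀ x, ∫⁻ t, g (x + 2 * t) = 2⁻¹ * ∫⁻ y, g y := fun x => by
    rw [lintegral_comp_mul_left (g := fun y => g (x + y)) (by fun_prop) two_ne_zero,
      lintegral_add_left_eq_self g x, abs_of_pos (by norm_num),
      ENNReal.ofReal_inv_of_pos two_pos, ENNReal.ofReal_ofNat]
  calc ∫⁻ t, ∫⁻ x, f (x - t) * g (x + t) = ∫⁻ t, ∫⁻ x, f x * g (x + 2 * t) := by
        refine lintegral_congr fun t => ?_
        rw [← lintegral_add_right_eq_self _ t]
        simp only [add_sub_cancel_right, add_assoc, ← two_mul]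
    _ = ∫⁻ x, ∫⁻ t, f x * g (x + 2 * t) :=
        lintegral_lintegral_swap ((hf.comp measurable_snd).mul
          (hg.comp (measurable_snd.add (measurable_fst.const_mul 2)))).aemeasurable
    _ = ∫⁻ x, f x * (2⁻¹ * ∫⁻ y, g y) := by
        refine lintegral_congr fun x => ?_
        rw [lintegral_const_mul _ (by fun_prop), hscale]
    _ = 2⁻¹ * (∫⁻ x, f x) * ∫⁻ x, g x := by
        rw [lintegral_mul_const _ hf]
        ring

theorem eLpNorm_comp_sub_mul_comp_add {p : ℝ≥0∞} (hp : p ≠ 0) (hp_top : p ≠ ⊤) {f g : ℝ → ℝ≥0∞}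
    (hf : Measurable f) (hg : Measurable g) :
    eLpNorm (fun z : ℝ × ℝ => f (z.2 - z.1) * g (z.2 + z.1)) p volume
      = 2⁻¹ ^ (1 / p.toReal) * eLpNorm f p volume * eLpNorm g p volume := by
  have hq : 0 ≤ 1 / p.toReal := by positivity
  simp only [eLpNorm_eq_lintegral_rpow_enorm_toReal hp hp_top, enorm_eq_self,
    ENNReal.mul_rpow_of_nonneg _ _ ENNReal.toReal_nonneg]
  rw [Measure.volume_eq_prod, lintegral_prod _ (by fun_prop),
    lintegral_lintegral_comp_sub_mul_comp_add (hf.pow_const _) (hg.pow_const _),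
    ENNReal.mul_rpow_of_nonneg _ _ hq, ENNReal.mul_rpow_of_nonneg _ _ hq]

theorem enorm_intervalIntegral_le_setLIntegral_Ioo {E : Type*} [NormedAddCommGroup E]
    [NormedSpace ℝ E] (φ : ℝ → E) {a t T : ℝ} (hat : a ≤ t) (htT : t < T) :
    ‖∫ s in a..t, φ s‖ₑ ≤ ∫⁻ s in Ioo a T, ‖φ s‖ₑ := by
  rw [intervalIntegral.integral_of_le hat]
  exact (enorm_integral_le_lintegral_enorm _).trans
    (lintegral_mono_set fun s hs => ⟨hs.1, hs.2.trans_lt htT⟩)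

theorem bilinear_estimate_duhamel_times_duhamel_general
    (p : ℝ≥0∞) (hp : 1 ≤ p) (hp' : p ≠ ⊤)
    (T : ℝ)
    (F G : ℝ → ℝ → ℂ)
    (hFmeas : Measurable (Function.uncurry F))
    (hGmeas : Measurable (Function.uncurry G)) :
    eLpNorm
        (fun q : ℝ × ℝ =>
          (∫ s in (0:ℝ)..q.1, F s (q.2 - q.1 + s)) *
          (∫ s in (0:ℝ)..q.1, G s (q.2 + q.1 - s))) p
        ((volume.restrict (Ioo (0:ℝ) T)).prod volume)
      ≤ (1/2 : ℝ≥0∞) ^ (1/p.toReal) *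
          (∫⁻ s in Ioo (0:ℝ) T, eLpNorm (F s) p volume) *
          (∫⁻ s in Ioo (0:ℝ) T, eLpNorm (G s) p volume) := by
  set f : ℝ → ℝ≥0∞ := fun u => ∫⁻ s in Ioo 0 T, ‖F s (u + s)‖ₑ
  set g : ℝ → ℝ≥0∞ := fun v => ∫⁻ s in Ioo 0 T, ‖G s (v - s)‖ₑ
  have hf : Measurable f := (hFmeas.comp
    (by fun_prop : Measurable fun z : ℝ × ℝ => (z.2, z.1 + z.2))).enorm.lintegral_prod_right'
  have hg : Measurable g := (hGmeas.comp
    (by fun_prop : Measurable fun z : ℝ × ℝ => (z.2, z.1 - z.2))).enorm.lintegral_prod_right'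
  have hbound : ∀ᵐ z ∂(volume.restrict (Ioo (0:ℝ) T)).prod volume,
      ‖(∫ s in (0:ℝ)..z.1, F s (z.2 - z.1 + s)) * (∫ s in (0:ℝ)..z.1, G s (z.2 + z.1 - s))‖ₑ
        ≤ ‖f (z.2 - z.1) * g (z.2 + z.1)‖ₑ := by
    filter_upwards [Measure.quasiMeasurePreserving_fst.ae (ae_restrict_mem measurableSet_Ioo)]
      with z hz
    rw [enorm_mul, enorm_eq_self]
    exact mul_le_mul' (enorm_intervalIntegral_le_setLIntegral_Ioo _ hz.1.le hz.2)
      (enorm_intervalIntegral_le_setLIntegral_Ioo _ hz.1.le hz.2)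
  have hfF : eLpNorm f p volume ≤ ∫⁻ s in Ioo 0 T, eLpNorm (F s) p volume := by
    simpa only [eLpNorm_enorm] using
      eLpNorm_lintegral_comp_le (ν := volume.restrict (Ioo 0 T)) hp hp'
        (h := fun s u => ‖F s u‖ₑ) hFmeas.enorm (τ := fun s u => u + s) (by fun_prop)
        (measurePreserving_add_right volume)
  have hgG : eLpNorm g p volume ≤ ∫⁻ s in Ioo 0 T, eLpNorm (G s) p volume := by
    simpa only [eLpNorm_enorm] using
      eLpNorm_lintegral_comp_le (ν := volume.restrict (Ioo 0 T)) hp hp'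
        (h := fun s u => ‖G s u‖ₑ) hGmeas.enorm (τ := fun s u => u - s) (by fun_prop)
        (measurePreserving_sub_right volume)
  calc _ ≤ eLpNorm (fun z : ℝ × ℝ => f (z.2 - z.1) * g (z.2 + z.1)) p
          ((volume.restrict (Ioo (0:ℝ) T)).prod volume) := eLpNorm_mono_enorm_ae hbound
    _ ≤ eLpNorm (fun z : ℝ × ℝ => f (z.2 - z.1) * g (z.2 + z.1)) p volume :=
        eLpNorm_mono_measure _ (Measure.prod_mono Measure.restrict_le_self le_rfl)
    _ = 2⁻¹ ^ (1 / p.toReal) * eLpNorm f p volume * eLpNorm g p volume :=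
        eLpNorm_comp_sub_mul_comp_add (zero_lt_one.trans_le hp).ne' hp' hf hg
    _ ≤ _ := by
        rw [one_div 2]
        gcongr

/-- Bilinear estimate in `L^p((0,T)×ℝ)` for the product of the Duhamel terms
of the right-moving equation `∂ₜu + ∂ₓu = F` and the left-moving equation
`∂ₜu − ∂ₓu = G`, both with zero initial data. -/
theorem bilinear_estimate_duhamel_times_duhamel
    (p : ℝ≥0∞) (hp : 1 ≤ p) (hp' : p ≠ ⊤)
    (T : ℝ) (hT : 0 < T)
    (F G : ℝ → ℝ → ℂ)
    (hFmeas : Measurable (Function.uncurry F))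
    (hGmeas : Measurable (Function.uncurry G))
    (hFint : (∫⁻ s in Ioo (0:ℝ) T, eLpNorm (F s) p volume) < ⊤)
    (hGint : (∫⁻ s in Ioo (0:ℝ) T, eLpNorm (G s) p volume) < ⊤) :
    eLpNorm
        (fun q : ℝ × ℝ =>
          (∫ s in (0:ℝ)..q.1, F s (q.2 - q.1 + s)) *
          (∫ s in (0:ℝ)..q.1, G s (q.2 + q.1 - s))) p
        ((volume.restrict (Ioo (0:ℝ) T)).prod volume)
      ≤ (1/2 : ℝ≥0∞) ^ (1/p.toReal) *
          (∫⁻ s in Ioo (0:ℝ) T, eLpNorm (F s) p volume) *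
          (∫⁻ s in Ioo (0:ℝ) T, eLpNorm (G s) p volume) :=
  bilinear_estimate_duhamel_times_duhamel_general p hp hp' T F G hFmeas hGmeas
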